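/- (Wigner–Yanase information matrix of a PQC with thermal-state initialization.) Let D_i = ∂_i ρ(φ) and define I^{WY}_{ij}(φ) = Σ_{k,ℓ<d} (4/(√λ_k + √λ_ℓ)²) ⟨k| D_i |ℓ⟩ ⟨ℓ| D_j |k⟩, where |k⟩ = U(φ)|k̃⟩ and (|k̃⟩, λ_k) is the eigensystem of ρ. Then for all i, j ∈ {1,…,J}: I^{WY}_{ij}(φ) = 4 · Tr[{A_i, A_j} ρ] − 8 · Tr[A_i √ρ A_j √ρ], where √ρ = e^{−G/2}/√Z, A_j = U_{R_j}† H_j U_{R_j}, and {X,Y} = XY + YX. -/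

import Mathlib

open Matrix

noncomputable section

attribute [local instance] Matrix.linftyOpNormedAddCommGroup Matrix.linftyOpNormedSpace

/-- Square complex matrices of size `d`. -/
abbrev Mat (d : ℕ) := Matrix (Fin d) (Fin d) ℂ

/-- Descending product `f (a + n - 1) * ⋯ * f (a + 1) * f a` (empty product is `1`). -/
def descProd {d : ℕ} (f : ℕ → Mat d) (a : ℕ) : ℕ → Mat d
  | 0 => 1
  | n + 1 => f (a + n) * descProd f a n

/-- The `j`-th layer `U_j(φ_j) = exp (−i φ_j H_j) V_j`. -/
def layer {d : ℕ} (H V : ℕ → Mat d) (φ : ℕ → ℝ) (j : ℕ) : Mat d :=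
  NormedSpace.exp ((-(Complex.I * (φ j : ℂ))) • H j) * V j

/-- `U_{R_j} = U_j ⋯ U_1`. -/
def UR {d : ℕ} (H V : ℕ → Mat d) (φ : ℕ → ℝ) (j : ℕ) : Mat d :=
  descProd (layer H V φ) 1 j

/-- `U_{L_j} = U_J ⋯ U_j`. -/
def UL {d : ℕ} (H V : ℕ → Mat d) (φ : ℕ → ℝ) (J j : ℕ) : Mat d :=
  descProd (layer H V φ) j (J + 1 - j)

/-- The full layered circuit `U(φ) = U_J ⋯ U_1`. -/
def Ufull {d : ℕ} (H V : ℕ → Mat d) (φ : ℕ → ℝ) (J : ℕ) : Mat d :=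
  UR H V φ J

/-- `B_j = U_{L_{j+1}} H_j U_{L_{j+1}}†`. -/
def Bmat {d : ℕ} (H V : ℕ → Mat d) (φ : ℕ → ℝ) (J j : ℕ) : Mat d :=
  UL H V φ J (j + 1) * H j * (UL H V φ J (j + 1))ᴴ

/-- `A_j = U_{R_j}† H_j U_{R_j}`. -/
def Amat {d : ℕ} (H V : ℕ → Mat d) (φ : ℕ → ℝ) (j : ℕ) : Mat d :=
  (UR H V φ j)ᴴ * H j * UR H V φ j

/-- The thermal state `ρ = e^{−G}/Z`. -/
def thermal {d : ℕ} (G : Mat d) (Z : ℝ) : Mat d :=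
  (Z : ℂ)⁻¹ • NormedSpace.exp (-G)

/-- The parameterized state `ρ(φ) = U(φ) ρ U(φ)†`. -/
def rhoFun {d : ℕ} (H V : ℕ → Mat d) (J : ℕ) (G : Mat d) (Z : ℝ) (φ : ℕ → ℝ) : Mat d :=
  Ufull H V φ J * thermal G Z * (Ufull H V φ J)ᴴ

/-- The sesquilinear form `⟨u| M |v⟩`, conjugate-linear in `u`. -/
def braket {d : ℕ} (u : Fin d → ℂ) (M : Mat d) (v : Fin d → ℂ) : ℂ :=
  star u ⬝ᵥ M.mulVec v

/-- `√ρ = e^{−G/2}/√Z`, the square root of the thermal state. -/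
def sqrtThermal {d : ℕ} (G : Mat d) (Z : ℝ) : Mat d :=
  ((Real.sqrt Z : ℂ))⁻¹ • NormedSpace.exp ((-(2⁻¹ : ℂ)) • G)

/-!
Conjugating by `U(φ)` moves everything into the eigenbasis `|k̃⟩` of `ρ`. Differentiating
`ρ(φ) = U ρ U†` in `φ_i` gives `∂_i ρ(φ) = -i [B_i, ρ(φ)]`, and `U† B_i U = A_i`, so
`⟨k| ∂_i ρ |ℓ⟩ = -i (λ_ℓ - λ_k) ⟨k̃| A_i |ℓ̃⟩`. The weight then collapses:
`4 (λ_k - λ_ℓ)² / (√λ_k + √λ_ℓ)² = 4 λ_k + 4 λ_ℓ - 8 √λ_k √λ_ℓ`, and the three resulting double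
sums are `Tr[A_i A_j ρ]`, `Tr[A_j A_i ρ]` and `Tr[A_i √ρ A_j √ρ]` written in the eigenbasis, where
`√ρ |k̃⟩ = √λ_k |k̃⟩` because `√ρ` is positive semidefinite and squares to `ρ`.
-/

attribute [local instance] Matrix.linftyOpNormedRing Matrix.linftyOpNormedAlgebra

theorem conjTranspose_mul_mul_cancel {d : ℕ} {U : Mat d} (hU : Uᴴ * U = 1) (X : Mat d) :
    Uᴴ * (U * X) = X := by
  rw [← mul_assoc, hU, one_mul]

theorem exp_mem_unitaryGroup {d : ℕ} {A : Mat d} (hA : Aᴴ = -A) :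
    NormedSpace.exp A ∈ unitaryGroup (Fin d) ℂ := by
  rw [mem_unitaryGroup_iff, star_eq_conjTranspose, ← exp_conjTranspose, hA,
    ← exp_add_of_commute _ _ (Commute.neg_right (Commute.refl A)), add_neg_cancel,
    NormedSpace.exp_zero]

section DescProd

variable {d : ℕ}

theorem descProd_add (f : ℕ → Mat d) (a m n : ℕ) :
    descProd f a (n + m) = descProd f (a + m) n * descProd f a m := by
  induction n with
  | zero => simp [descProd]
  | succ n ih =>
    rw [Nat.add_right_comm, descProd, descProd, ih, ← Nat.add_assoc, Nat.add_right_comm a,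
      mul_assoc]

theorem descProd_congr {f g : ℕ → Mat d} (a n : ℕ) (h : ∀ m, a ≤ m → m < a + n → f m = g m) :
    descProd f a n = descProd g a n := by
  induction n with
  | zero => rfl
  | succ n ih =>
    rw [descProd, descProd, h _ (by omega) (by omega), ih fun m h1 h2 => h m h1 (by omega)]

theorem descProd_mem_unitaryGroup {f : ℕ → Mat d} (h : ∀ m, f m ∈ unitaryGroup (Fin d) ℂ)
    (a n : ℕ) : descProd f a n ∈ unitaryGroup (Fin d) ℂ := by
  induction n with
  | zero => exact one_mem _
  | succ n ih => exact mul_mem (h _) ih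

end DescProd

section Layers

variable {d J : ℕ} (H V : ℕ → Mat d) (φ : ℕ → ℝ) {i : ℕ}

theorem layer_mem_unitaryGroup (hH : ∀ j, (H j).IsHermitian)
    (hV : ∀ j, V j ∈ unitaryGroup (Fin d) ℂ) (m : ℕ) :
    layer H V φ m ∈ unitaryGroup (Fin d) ℂ := by
  refine mul_mem (exp_mem_unitaryGroup ?_) (hV m)
  rw [conjTranspose_smul, (hH m).eq, ← neg_smul]
  simp

theorem layer_update_of_ne (x : ℝ) {m : ℕ} (h : m ≠ i) :
    layer H V (Function.update φ i x) m = layer H V φ m := by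
  simp [layer, Function.update_of_ne h]

theorem UR_eq_layer_mul (hi : 1 ≤ i) : UR H V φ i = layer H V φ i * UR H V φ (i - 1) := by
  obtain ⟨n, rfl⟩ := Nat.exists_eq_add_of_le' hi
  rw [UR, UR, descProd, Nat.add_sub_cancel, Nat.add_comm]

theorem Ufull_eq_UL_mul_UR (hiJ : i ≤ J) : Ufull H V φ J = UL H V φ J (i + 1) * UR H V φ i := by
  obtain ⟨n, rfl⟩ := Nat.exists_eq_add_of_le' hiJ
  rw [Ufull, UR, UL, descProd_add, UR, Nat.add_comm 1 i]
  congr 2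
  omega

theorem UL_update (x : ℝ) : UL H V (Function.update φ i x) J (i + 1) = UL H V φ J (i + 1) :=
  descProd_congr _ _ fun _ hm _ => layer_update_of_ne H V φ x (by omega)

theorem UR_update (x : ℝ) : UR H V (Function.update φ i x) (i - 1) = UR H V φ (i - 1) :=
  descProd_congr _ _ fun _ _ hm => layer_update_of_ne H V φ x (by omega)

theorem Ufull_update (hi : 1 ≤ i) (hiJ : i ≤ J) (x : ℝ) :
    Ufull H V (Function.update φ i x) J =
      UL H V φ J (i + 1) *
        (NormedSpace.exp ((-Complex.I * x) • H i) * (V i * UR H V φ (i - 1))) := by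
  rw [Ufull_eq_UL_mul_UR _ _ _ hiJ, UR_eq_layer_mul _ _ _ hi, UL_update, UR_update, layer,
    Function.update_self, neg_mul, mul_assoc]

end Layers

section Derivative

variable {d : ℕ}

theorem hasDerivAt_exp_mul_smul (H : Mat d) (c : ℂ) (t : ℝ) :
    HasDerivAt (fun x : ℝ => NormedSpace.exp ((c * x) • H))
      (NormedSpace.exp ((c * t) • H) * (c • H)) t := by
  have h : ∀ x : ℝ, (x • (c • H) : Mat d) = (c * x) • H := fun x => by
    rw [← smul_one_smul ℂ x (c • H), smul_smul]
    simp [mul_comm]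
  have := hasDerivAt_exp_smul_const (𝕂 := ℝ) (c • H) t
  simp only [h] at this
  exact this

theorem conjTranspose_exp_smul {H : Mat d} (hH : H.IsHermitian) (c : ℂ) :
    (NormedSpace.exp (c • H))ᴴ = NormedSpace.exp (star c • H) := by
  rw [← exp_conjTranspose, conjTranspose_smul, hH.eq]

theorem hasDerivAt_conj_exp {H L : Mat d} (hH : H.IsHermitian) (hL : Lᴴ * L = 1) {S : Mat d}
    {ρ : ℝ → Mat d} (hρ : ∀ x : ℝ, ρ x = L * NormedSpace.exp ((-Complex.I * x) • H) * S *
      (L * NormedSpace.exp ((-Complex.I * x) • H))ᴴ) (t : ℝ) :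
    HasDerivAt ρ ((-Complex.I) • (L * H * Lᴴ * ρ t - ρ t * (L * H * Lᴴ))) t := by
  have hstar : ∀ x : ℝ, star (-Complex.I * x) = Complex.I * x := fun x => by simp
  simp only [funext hρ, conjTranspose_mul, conjTranspose_exp_smul hH, hstar]
  have hE := hasDerivAt_exp_mul_smul H (-Complex.I) t
  have hE' := hasDerivAt_exp_mul_smul H Complex.I t
  refine (((hE.const_mul L).mul_const S).mul (hE'.mul_const Lᴴ)).congr_deriv ?_
  have hcomm : NormedSpace.exp ((-Complex.I * t) • H) * H =
      H * NormedSpace.exp ((-Complex.I * t) • H) :=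
    ((Commute.refl H).smul_left _).exp_left.eq
  simp only [Matrix.smul_mul, Matrix.mul_smul, ← mul_assoc, hcomm]
  simp only [mul_assoc, conjTranspose_mul_mul_cancel hL]
  module

end Derivative

section Thermal

open scoped ComplexOrder

variable {d : ℕ} {G : Mat d}

theorem thermal_isHermitian (hG : G.IsHermitian) (Z : ℝ) : (thermal G Z).IsHermitian := by
  rw [IsHermitian, thermal, conjTranspose_smul, ← exp_conjTranspose, conjTranspose_neg, hG.eq,
    star_inv₀, Complex.star_def, Complex.conj_ofReal]

theorem sqrtThermal_mul_self (G : Mat d) {Z : ℝ} (hZ : 0 ≤ Z) :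
    sqrtThermal G Z * sqrtThermal G Z = thermal G Z := by
  rw [sqrtThermal, thermal, smul_mul_smul_comm, ← exp_add_of_commute _ _ (Commute.refl _),
    ← add_smul, ← mul_inv, ← Complex.ofReal_mul, Real.mul_self_sqrt hZ]
  norm_num

theorem sqrtThermal_posSemidef (hG : G.IsHermitian) (Z : ℝ) : (sqrtThermal G Z).PosSemidef := by
  have hQ : (NormedSpace.exp ((-(4⁻¹ : ℂ)) • G))ᴴ * NormedSpace.exp ((-(4⁻¹ : ℂ)) • G) =
      NormedSpace.exp ((-(2⁻¹ : ℂ)) • G) := by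
    rw [conjTranspose_exp_smul hG, show star (-(4⁻¹ : ℂ)) = -4⁻¹ by simp,
      ← exp_add_of_commute _ _ (Commute.refl _), ← add_smul]
    norm_num
  rw [sqrtThermal, ← hQ, ← Complex.ofReal_inv]
  exact (posSemidef_conjTranspose_mul_self _).smul (Complex.zero_le_real.mpr (by positivity))

end Thermal

section Eigen

open scoped ComplexOrder

variable {n : Type*} [Fintype n]

theorem Matrix.PosSemidef.mulVec_eq_sqrt_smul {P : Matrix n n ℂ} (hP : P.PosSemidef)
    {u : n → ℂ} {μ : ℝ} (hμ : 0 < μ) (h : (P * P) *ᵥ u = (μ : ℂ) • u) :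
    P *ᵥ u = ((√μ : ℝ) : ℂ) • u := by
  set s : ℂ := ((√μ : ℝ) : ℂ)
  have hs : 0 < s := Complex.zero_lt_real.mpr (Real.sqrt_pos.mpr hμ)
  have hss : s * s = μ := by rw [← Complex.ofReal_mul, Real.mul_self_sqrt hμ.le]
  set w := P *ᵥ u - s • u
  -- `(P + s) w = P² u - s² u = 0`, so `w` is an eigenvector of `P` with eigenvalue `-s < 0`.
  have hPw : P *ᵥ w = -s • w := by
    simp only [w, mulVec_sub, mulVec_mulVec, h, mulVec_smul, smul_sub, smul_smul, ← hss]
    module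
  have hnn := hP.dotProduct_mulVec_nonneg w
  rw [hPw, dotProduct_smul, smul_eq_mul, neg_mul, neg_nonneg] at hnn
  have hsw : s * (star w ⬝ᵥ w) = 0 :=
    le_antisymm hnn (mul_nonneg hs.le (dotProduct_star_self_nonneg w))
  have hw : w = 0 := dotProduct_star_self_eq_zero.mp ((mul_eq_zero.mp hsw).resolve_left hs.ne')
  exact sub_eq_zero.mp hw

theorem Matrix.IsHermitian.star_vecMul_of_mulVec_eq_smul {A : Matrix n n ℂ} (hA : A.IsHermitian)
    {u : n → ℂ} {μ : ℝ} (h : A *ᵥ u = (μ : ℂ) • u) : star u ᵥ* A = (μ : ℂ) • star u := by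
  rw [← hA.eq, ← star_mulVec, h, star_smul, Complex.star_def, Complex.conj_ofReal]

end Eigen

section Braket

variable {d : ℕ}

theorem braket_mulVec (A X : Mat d) (u w : Fin d → ℂ) :
    braket (A *ᵥ u) X (A *ᵥ w) = braket u (Aᴴ * X * A) w := by
  simp only [braket, star_mulVec, mulVec_mulVec, dotProduct_mulVec, vecMul_vecMul, mul_assoc]

theorem braket_smul_commutator {ρ : Mat d} (hρ : ρ.IsHermitian) (c : ℂ) (X : Mat d)
    {u w : Fin d → ℂ} {μ ν : ℝ} (hu : ρ *ᵥ u = (μ : ℂ) • u) (hw : ρ *ᵥ w = (ν : ℂ) • w) :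
    braket u (c • (X * ρ - ρ * X)) w = c * (ν - μ) * braket u X w := by
  rw [braket, smul_mulVec, sub_mulVec, ← mulVec_mulVec, ← mulVec_mulVec, hw, mulVec_smul,
    dotProduct_smul, dotProduct_sub, dotProduct_mulVec _ ρ,
    hρ.star_vecMul_of_mulVec_eq_smul hu, dotProduct_smul, smul_dotProduct, ← braket]
  simp only [smul_eq_mul]
  ring

theorem conjTranspose_mul_commutator_conj {U : Mat d} (hU : Uᴴ * U = 1) (B ρ : Mat d) :
    Uᴴ * (B * (U * ρ * Uᴴ) - U * ρ * Uᴴ * B) * U = Uᴴ * B * U * ρ - ρ * (Uᴴ * B * U) := by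
  simp only [mul_sub, sub_mul, mul_assoc, conjTranspose_mul_mul_cancel hU, hU, mul_one]

end Braket

section Frame

variable {d : ℕ}

def frame (v : Fin d → Fin d → ℂ) : Mat d := (Matrix.of v)ᵀ

variable {v : Fin d → Fin d → ℂ}

theorem frame_conjTranspose_mul_self (hv : ∀ k l, star (v k) ⬝ᵥ v l = if k = l then 1 else 0) :
    (frame v)ᴴ * frame v = 1 := by
  ext k l
  simpa [frame, mul_apply, one_apply, dotProduct] using hv k l

theorem braket_eq_conj_frame_apply (X : Mat d) (k l : Fin d) :
    braket (v k) X (v l) = ((frame v)ᴴ * X * frame v) k l := by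
  simp only [braket, dotProduct, mulVec, frame, mul_apply, conjTranspose_apply, transpose_apply,
    of_apply, Pi.star_apply, Finset.mul_sum, Finset.sum_mul, mul_assoc]
  exact Finset.sum_comm

theorem conj_frame_eq_diagonal (hv : ∀ k l, star (v k) ⬝ᵥ v l = if k = l then 1 else 0)
    {M : Mat d} {μ : Fin d → ℝ} (hM : ∀ k, M *ᵥ v k = (μ k : ℂ) • v k) :
    (frame v)ᴴ * M * frame v = diagonal fun k => (μ k : ℂ) := by
  have h : M * frame v = frame v * diagonal fun k => (μ k : ℂ) := by
    ext i l
    rw [mul_diagonal]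
    simpa [frame, mul_apply, mulVec, dotProduct, mul_comm] using congrFun (hM l) i
  rw [mul_assoc, h, ← mul_assoc, frame_conjTranspose_mul_self hv, one_mul]

end Frame

theorem four_div_sq_sqrt_add_sqrt_mul_sq_sub {a b : ℝ} (ha : 0 ≤ a) (hb : 0 ≤ b) :
    4 / (√a + √b) ^ 2 * (a - b) ^ 2 = 4 * a + 4 * b - 8 * √a * √b := by
  rcases eq_or_lt_of_le (add_nonneg (Real.sqrt_nonneg a) (Real.sqrt_nonneg b)) with h | h
  · obtain ⟨ha0, hb0⟩ :=
      (add_eq_zero_iff_of_nonneg (Real.sqrt_nonneg a) (Real.sqrt_nonneg b)).mp h.symm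
    rw [Real.sqrt_eq_zero ha] at ha0
    rw [Real.sqrt_eq_zero hb] at hb0
    simp [ha0, hb0]
  · have hab : a - b = (√a - √b) * (√a + √b) := by
      linear_combination -Real.sq_sqrt ha + Real.sq_sqrt hb
    calc 4 / (√a + √b) ^ 2 * (a - b) ^ 2 = 4 * (√a - √b) ^ 2 := by
          rw [hab]
          field_simp
      _ = 4 * a + 4 * b - 8 * √a * √b := by
          rw [sub_sq, Real.sq_sqrt ha, Real.sq_sqrt hb]
          ring

section Trace

variable {n : Type*} [Fintype n] [DecidableEq n]

theorem trace_conjTranspose_mul_mul {U : Matrix n n ℂ} (hU : U * Uᴴ = 1) (X : Matrix n n ℂ) :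
    (Uᴴ * X * U).trace = X.trace := by
  rw [trace_mul_cycle, hU, one_mul]

theorem conjTranspose_mul_mul_conj {U : Matrix n n ℂ} (hU : U * Uᴴ = 1) (X Y : Matrix n n ℂ) :
    Uᴴ * (X * Y) * U = (Uᴴ * X * U) * (Uᴴ * Y * U) := by
  simp only [mul_assoc, ← mul_assoc U, hU, one_mul]

theorem trace_mul_mul_diagonal (α β : Matrix n n ℂ) (μ : n → ℂ) :
    (α * β * diagonal μ).trace = ∑ k, ∑ l, α k l * β l k * μ k := by
  simp only [trace, diag, mul_diagonal]
  simp only [mul_apply, Finset.sum_mul]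

theorem trace_mul_diagonal_mul_mul_diagonal (α β : Matrix n n ℂ) (s : n → ℂ) :
    (α * diagonal s * β * diagonal s).trace = ∑ k, ∑ l, α k l * β l k * (s k * s l) := by
  simp only [trace_mul_mul_diagonal, mul_diagonal]
  refine Finset.sum_congr rfl fun k _ => Finset.sum_congr rfl fun l _ => ?_
  ring

theorem sum_wy_weight_mul_commutator_entries (α β : Matrix n n ℂ) {μ : n → ℝ}
    (hμ : ∀ k, 0 ≤ μ k) :
    ∑ k, ∑ l, ((4 / (√(μ k) + √(μ l)) ^ 2 : ℝ) : ℂ) *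
        (-Complex.I * (μ l - μ k) * α k l) * (-Complex.I * (μ k - μ l) * β l k) =
      4 * ((α * β * diagonal fun k => (μ k : ℂ)).trace +
          (β * α * diagonal fun k => (μ k : ℂ)).trace) -
        8 * (α * (diagonal fun k => ((√(μ k) : ℝ) : ℂ)) * β *
          diagonal fun k => ((√(μ k) : ℝ) : ℂ)).trace := by
  rw [trace_mul_mul_diagonal, trace_mul_mul_diagonal, trace_mul_diagonal_mul_mul_diagonal,
    Finset.sum_comm (f := fun k l => β k l * α l k * _)]
  simp only [Finset.mul_sum, ← Finset.sum_add_distrib, ← Finset.sum_sub_distrib]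
  refine Finset.sum_congr rfl fun k _ => Finset.sum_congr rfl fun l _ => ?_
  have hw := congrArg (fun x : ℝ => (x : ℂ)) (four_div_sq_sqrt_add_sqrt_mul_sq_sub (hμ k) (hμ l))
  push_cast at hw ⊢
  linear_combination (α k l * β l k) * hw - 4 / ((√(μ k) : ℂ) + (√(μ l) : ℂ)) ^ 2 *
    ((μ k : ℂ) - μ l) ^ 2 * α k l * β l k * Complex.I_mul_I

end Trace

section Evolution

variable {d J : ℕ} {H V : ℕ → Mat d} (φ : ℕ → ℝ) {i : ℕ}

theorem UL_mem_unitaryGroup (hH : ∀ j, (H j).IsHermitian) (hV : ∀ j, V j ∈ unitaryGroup (Fin d) ℂ)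
    (J i : ℕ) : UL H V φ J i ∈ unitaryGroup (Fin d) ℂ :=
  descProd_mem_unitaryGroup (layer_mem_unitaryGroup H V φ hH hV) _ _

theorem Ufull_mem_unitaryGroup (hH : ∀ j, (H j).IsHermitian)
    (hV : ∀ j, V j ∈ unitaryGroup (Fin d) ℂ) (J : ℕ) : Ufull H V φ J ∈ unitaryGroup (Fin d) ℂ :=
  descProd_mem_unitaryGroup (layer_mem_unitaryGroup H V φ hH hV) _ _

theorem hasDerivAt_rhoFun (hH : ∀ j, (H j).IsHermitian) (hV : ∀ j, V j ∈ unitaryGroup (Fin d) ℂ)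
    (G : Mat d) (Z : ℝ) (hi : 1 ≤ i) (hiJ : i ≤ J) :
    HasDerivAt (fun x : ℝ => rhoFun H V J G Z (Function.update φ i x))
      ((-Complex.I) • (Bmat H V φ J i * rhoFun H V J G Z φ -
        rhoFun H V J G Z φ * Bmat H V φ J i)) (φ i) := by
  set L := UL H V φ J (i + 1)
  set R := V i * UR H V φ (i - 1)
  have hρ : ∀ x : ℝ, rhoFun H V J G Z (Function.update φ i x) =
      L * NormedSpace.exp ((-Complex.I * x) • H i) * (R * thermal G Z * Rᴴ) *
        (L * NormedSpace.exp ((-Complex.I * x) • H i))ᴴ := fun x => by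
    simp only [rhoFun, Ufull_update H V φ hi hiJ, L, R, conjTranspose_mul, mul_assoc]
  have hL : Lᴴ * L = 1 := mem_unitaryGroup_iff'.mp (UL_mem_unitaryGroup φ hH hV J (i + 1))
  have h := hasDerivAt_conj_exp (hH i) hL hρ (φ i)
  rw [Function.update_eq_self] at h
  exact h

theorem conjTranspose_Ufull_mul_Bmat_mul_Ufull (hH : ∀ j, (H j).IsHermitian)
    (hV : ∀ j, V j ∈ unitaryGroup (Fin d) ℂ) (hiJ : i ≤ J) :
    (Ufull H V φ J)ᴴ * Bmat H V φ J i * Ufull H V φ J = Amat H V φ i := by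
  have hL : (UL H V φ J (i + 1))ᴴ * UL H V φ J (i + 1) = 1 :=
    mem_unitaryGroup_iff'.mp (UL_mem_unitaryGroup φ hH hV J (i + 1))
  rw [Ufull_eq_UL_mul_UR H V φ hiJ, Bmat, Amat, conjTranspose_mul]
  simp only [mul_assoc, conjTranspose_mul_mul_cancel hL]

theorem braket_Ufull_mulVec_of_hasDerivAt (hH : ∀ j, (H j).IsHermitian)
    (hV : ∀ j, V j ∈ unitaryGroup (Fin d) ℂ) {G : Mat d} (hG : G.IsHermitian) {Z : ℝ}
    (hi : 1 ≤ i) (hiJ : i ≤ J) {D : Mat d}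
    (hD : HasDerivAt (fun x : ℝ => rhoFun H V J G Z (Function.update φ i x)) D (φ i))
    {u w : Fin d → ℂ} {μ ν : ℝ} (hu : thermal G Z *ᵥ u = (μ : ℂ) • u)
    (hw : thermal G Z *ᵥ w = (ν : ℂ) • w) :
    braket (Ufull H V φ J *ᵥ u) D (Ufull H V φ J *ᵥ w) =
      -Complex.I * (ν - μ) * braket u (Amat H V φ i) w := by
  have hU : (Ufull H V φ J)ᴴ * Ufull H V φ J = 1 :=
    mem_unitaryGroup_iff'.mp (Ufull_mem_unitaryGroup φ hH hV J)
  rw [hD.unique (hasDerivAt_rhoFun φ hH hV G Z hi hiJ), braket_mulVec, Matrix.mul_smul,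
    Matrix.smul_mul, rhoFun, conjTranspose_mul_commutator_conj hU,
    conjTranspose_Ufull_mul_Bmat_mul_Ufull φ hH hV hiJ,
    braket_smul_commutator (thermal_isHermitian hG Z) _ _ hu hw]

end Evolution

theorem wigner_yanase_pqc_general {d J : ℕ}
    (H V G : _) (hH : ∀ j, (H j : Mat d).IsHermitian)
    (hV : ∀ j, V j ∈ Matrix.unitaryGroup (Fin d) ℂ)
    (hG : (G : Mat d).IsHermitian)
    (Z : ℝ) (hZpos : 0 < Z)
    (v : Fin d → Fin d → ℂ)
    (hortho : ∀ k l, star (v k) ⬝ᵥ v l = if k = l then 1 else 0)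
    (lam : Fin d → ℝ) (hlampos : ∀ k, 0 < lam k)
    (hrhov : ∀ k, (thermal G Z).mulVec (v k) = (lam k : ℂ) • v k)
    (φ : ℕ → ℝ) (i j : ℕ) (hi1 : 1 ≤ i) (hiJ : i ≤ J) (hj1 : 1 ≤ j) (hjJ : j ≤ J)
    (Di Dj : Mat d)
    (hDi : HasDerivAt (fun x : ℝ => rhoFun H V J G Z (Function.update φ i x)) Di (φ i))
    (hDj : HasDerivAt (fun x : ℝ => rhoFun H V J G Z (Function.update φ j x)) Dj (φ j)) :
    ∑ k : Fin d, ∑ l : Fin d,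
        ((4 / (Real.sqrt (lam k) + Real.sqrt (lam l)) ^ 2 : ℝ) : ℂ) *
          braket ((Ufull H V φ J).mulVec (v k)) Di ((Ufull H V φ J).mulVec (v l)) *
          braket ((Ufull H V φ J).mulVec (v l)) Dj ((Ufull H V φ J).mulVec (v k)) =
      4 * ((Amat H V φ i * Amat H V φ j + Amat H V φ j * Amat H V φ i) *
          thermal G Z).trace -
        8 * (Amat H V φ i * sqrtThermal G Z * Amat H V φ j * sqrtThermal G Z).trace := by
  have hW : frame v * (frame v)ᴴ = 1 := mul_eq_one_comm.mp (frame_conjTranspose_mul_self hortho)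
  have hσ : ∀ k, sqrtThermal G Z *ᵥ v k = ((√(lam k) : ℝ) : ℂ) • v k := fun k =>
    (sqrtThermal_posSemidef hG Z).mulVec_eq_sqrt_smul (hlampos k)
      (by rw [sqrtThermal_mul_self G hZpos.le, hrhov])
  simp only [braket_Ufull_mulVec_of_hasDerivAt φ hH hV hG hi1 hiJ hDi (hrhov _) (hrhov _),
    braket_Ufull_mulVec_of_hasDerivAt φ hH hV hG hj1 hjJ hDj (hrhov _) (hrhov _),
    braket_eq_conj_frame_apply]
  rw [Matrix.add_mul, trace_add, ← trace_conjTranspose_mul_mul hW (_ * _ * thermal G Z),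
    ← trace_conjTranspose_mul_mul hW (_ * _ * thermal G Z),
    ← trace_conjTranspose_mul_mul hW (_ * _ * _ * sqrtThermal G Z)]
  simp only [conjTranspose_mul_mul_conj hW, conj_frame_eq_diagonal hortho hrhov,
    conj_frame_eq_diagonal hortho hσ]
  exact sum_wy_weight_mul_commutator_entries _ _ fun k => (hlampos k).le

/-- Wigner–Yanase information matrix of a PQC with thermal-state initialization:
`I^{WY}_{ij}(φ) = 4 Tr[{A_i,A_j} ρ] − 8 Tr[A_i √ρ A_j √ρ]`. -/
theorem wigner_yanase_pqc {d J : ℕ} (hd : 1 ≤ d)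
    (H V G : _) (hH : ∀ j, (H j : Mat d).IsHermitian)
    (hV : ∀ j, V j ∈ Matrix.unitaryGroup (Fin d) ℂ)
    (hG : (G : Mat d).IsHermitian)
    (Z : ℝ) (hZpos : 0 < Z) (hZ : (NormedSpace.exp (-G)).trace = (Z : ℂ))
    (v : Fin d → Fin d → ℂ)
    (hortho : ∀ k l, star (v k) ⬝ᵥ v l = if k = l then 1 else 0)
    (lam : Fin d → ℝ) (hlampos : ∀ k, 0 < lam k)
    (hrhov : ∀ k, (thermal G Z).mulVec (v k) = (lam k : ℂ) • v k)
    (φ : ℕ → ℝ) (i j : ℕ) (hi1 : 1 ≤ i) (hiJ : i ≤ J) (hj1 : 1 ≤ j) (hjJ : j ≤ J)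
    (Di Dj : Mat d)
    (hDi : HasDerivAt (fun x : ℝ => rhoFun H V J G Z (Function.update φ i x)) Di (φ i))
    (hDj : HasDerivAt (fun x : ℝ => rhoFun H V J G Z (Function.update φ j x)) Dj (φ j)) :
    ∑ k : Fin d, ∑ l : Fin d,
        ((4 / (Real.sqrt (lam k) + Real.sqrt (lam l)) ^ 2 : ℝ) : ℂ) *
          braket ((Ufull H V φ J).mulVec (v k)) Di ((Ufull H V φ J).mulVec (v l)) *
          braket ((Ufull H V φ J).mulVec (v l)) Dj ((Ufull H V φ J).mulVec (v k)) =
      4 * ((Amat H V φ i * Amat H V φ j + Amat H V φ j * Amat H V φ i) *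
          thermal G Z).trace -
        8 * (Amat H V φ i * sqrtThermal G Z * Amat H V φ j * sqrtThermal G Z).trace :=
  wigner_yanase_pqc_general H V G hH hV hG Z hZpos v hortho lam hlampos hrhov φ i j hi1 hiJ hj1 hjJ
    Di Dj hDi hDj
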